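/- arXiv:0810.2789 — 6 statements merged into one kernel-verified Lean document; each statement's English description precedes it below -/
import Mathlib

section
/- Let C/C₁ be an extension of F-linear codes of length n with dim C/C₁ = 1, and let D₁/D be the corresponding dual extension (D = C^⊥, D₁ = C₁^⊥) with dim D₁/D = 1. Suppose there exist vectors a₁,…,a_w and b₁,…,b_w in F^n such that the coordinatewise product a_i ∗ b_j lies in D whenever i+j ≤ w, and a_i ∗ b_j lies in D₁ \ D whenever i+j = w+1. Then every codeword c ∈ C \ C₁ has Hamming weight at least w; that is, d(C/C₁) ≥ w. -/
/-- The dual code of a linear code `C ⊆ F^n`, with respect to the standard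
bilinear form `(x, c) ↦ ∑ i, x i * c i`. -/
def dualCode {F : Type*} [Field F] {n : ℕ} (C : Submodule F (Fin n → F)) :
    Submodule F (Fin n → F) where
  carrier := {x | ∀ c ∈ C, ∑ i, x i * c i = 0}
  add_mem' := by
    intro a b ha hb c hc
    simp only [Pi.add_apply, add_mul, Finset.sum_add_distrib, ha c hc, hb c hc, add_zero]
  zero_mem' := by intro c hc; simp
  smul_mem' := by
    intro r a ha c hc
    simp only [Pi.smul_apply, smul_eq_mul, mul_assoc, ← Finset.mul_sum, ha c hc, mul_zero]

/-! The matrix `M i j = (a i ∗ b j) · c = ∑ k, a i k * c k * b j k` factors as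
`A * diagonal c * Bᵀ`, so its rank is at most the weight of `c`. By hypothesis `M` vanishes
above the antidiagonal, and its antidiagonal entries are nonzero because `C = C₁ + F c` by a
dimension count, so a vector of `D₁ \ D` cannot be orthogonal to `c`. Hence `M` has rank `w`. -/

open Matrix

theorem mem_dualCode_iff {F : Type*} [Field F] {n : ℕ} {C : Submodule F (Fin n → F)}
    {x : Fin n → F} : x ∈ dualCode C ↔ ∀ c ∈ C, x ⬝ᵥ c = 0 :=
  Iff.rfl

theorem Submodule.sup_span_singleton_eq_of_finrank_eq_succ {K V : Type*} [DivisionRing K]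
    [AddCommGroup V] [Module K V] [FiniteDimensional K V] {p q : Submodule K V} {v : V}
    (hpq : p ≤ q) (hfin : Module.finrank K q = Module.finrank K p + 1) (hvq : v ∈ q)
    (hvp : v ∉ p) : p ⊔ span K {v} = q :=
  eq_of_le_of_finrank_le (sup_le hpq ((span_singleton_le_iff_mem v q).2 hvq))
    (by rw [finrank_sup_span_singleton hvp, hfin])

theorem dotProduct_ne_zero_of_mem_dualCode_of_notMem {F : Type*} [Field F] {n : ℕ}
    {C C₁ : Submodule F (Fin n → F)} (hsub : C₁ ≤ C)
    (hdimC : Module.finrank F C = Module.finrank F C₁ + 1) {c : Fin n → F} (hc : c ∈ C)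
    (hc₁ : c ∉ C₁) {x : Fin n → F} (hx₁ : x ∈ dualCode C₁) (hx : x ∉ dualCode C) :
    x ⬝ᵥ c ≠ 0 := by
  intro hxc
  refine hx (mem_dualCode_iff.2 fun y hy => ?_)
  rw [← Submodule.sup_span_singleton_eq_of_finrank_eq_succ hsub hdimC hc hc₁] at hy
  obtain ⟨y₁, hy₁, z, hz, rfl⟩ := Submodule.mem_sup.1 hy
  obtain ⟨t, rfl⟩ := Submodule.mem_span_singleton.1 hz
  rw [dotProduct_add, dotProduct_smul, mem_dualCode_iff.1 hx₁ y₁ hy₁, hxc, smul_zero, add_zero]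

theorem Matrix.rank_mul_diagonal_mul_le {R l m n : Type*} [Field R] [DecidableEq R]
    [Fintype m] [Fintype n] [DecidableEq m] (A : Matrix l m R) (d : m → R) (B : Matrix m n R) :
    (A * diagonal d * B).rank ≤ hammingNorm d :=
  calc (A * diagonal d * B).rank ≤ (diagonal d * B).rank := by
        rw [Matrix.mul_assoc]; exact rank_mul_le_right _ _
    _ ≤ (diagonal d).rank := rank_mul_le_left _ _
    _ = hammingNorm d := by rw [rank_diagonal, hammingNorm, Fintype.card_subtype]

theorem Matrix.rank_eq_of_antidiagonal_ne_zero {K : Type*} [Field K] {w : ℕ}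
    (M : Matrix (Fin w) (Fin w) K)
    (hzero : ∀ i j : Fin w, ((i : ℕ) + 1) + ((j : ℕ) + 1) ≤ w → M i j = 0)
    (hanti : ∀ i j : Fin w, ((i : ℕ) + 1) + ((j : ℕ) + 1) = w + 1 → M i j ≠ 0) :
    M.rank = w := by
  -- Reversing the columns makes `M` lower triangular with the antidiagonal on the diagonal.
  set N := M.submatrix (Equiv.refl _) Fin.revPerm
  have hN : N.IsLowerTriangular := fun i j (hij : i < j) =>
    hzero i _ (by rw [Fin.revPerm_apply, Fin.val_rev]; omega)
  have hdiag : ∀ i, N.diag i ≠ 0 := fun i =>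
    hanti i _ (by rw [Fin.revPerm_apply, Fin.val_rev]; omega)
  calc M.rank = N.rank := (rank_submatrix M _ _).symm
    _ = (N * 1).rank := by rw [Matrix.mul_one]
    _ = w := by
      rw [rank_mul_eq_right_of_isLowerTriangular N 1 hN hdiag, rank_one, Fintype.card_fin]

theorem coset_bound_general {F : Type*} [Field F] [DecidableEq F] {n w : ℕ}
    (C C₁ : Submodule F (Fin n → F)) (hsub : C₁ ≤ C)
    (hdimC : Module.finrank F C = Module.finrank F C₁ + 1)
    (a b : Fin w → (Fin n → F))
    (hD : ∀ i j : Fin w, ((i : ℕ) + 1) + ((j : ℕ) + 1) ≤ w →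
      (fun k => a i k * b j k) ∈ dualCode C)
    (hD1 : ∀ i j : Fin w, ((i : ℕ) + 1) + ((j : ℕ) + 1) = w + 1 →
      (fun k => a i k * b j k) ∈ dualCode C₁ ∧ (fun k => a i k * b j k) ∉ dualCode C) :
    ∀ c ∈ C, c ∉ C₁ → w ≤ hammingNorm c := by
  intro c hc hc₁
  have hM : ∀ i j, (of a * diagonal c * (of b)ᵀ) i j = (fun k => a i k * b j k) ⬝ᵥ c := by
    intro i j
    rw [mul_apply]
    simp only [mul_diagonal, of_apply, transpose_apply, dotProduct]
    exact Finset.sum_congr rfl fun k _ => by ring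
  have hrank : (of a * diagonal c * (of b)ᵀ).rank = w :=
    rank_eq_of_antidiagonal_ne_zero _ (fun i j hij => hM i j ▸ hD i j hij c hc)
      (fun i j hij => hM i j ▸ dotProduct_ne_zero_of_mem_dualCode_of_notMem hsub hdimC hc hc₁
        (hD1 i j hij).1 (hD1 i j hij).2)
  exact hrank ▸ rank_mul_diagonal_mul_le _ _ _

/-- Shift bound / coset bound (Theorem `T:cosetbound`): given an extension
`C₁ ⊆ C` of linear codes with `dim C/C₁ = dim D₁/D = 1` (where `D = C^⊥`,
`D₁ = C₁^⊥`), and vectors `a₁, …, a_w`, `b₁, …, b_w` whose Hadamard products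
`a_i ∗ b_j` lie in `D` whenever `i + j ≤ w` and in `D₁ \ D` whenever
`i + j = w + 1`, every codeword `c ∈ C \ C₁` has Hamming weight at least `w`. -/
theorem coset_bound {F : Type*} [Field F] [Fintype F] [DecidableEq F] {n w : ℕ}
    (C C₁ : Submodule F (Fin n → F)) (hsub : C₁ ≤ C)
    (hdimC : Module.finrank F C = Module.finrank F C₁ + 1)
    (hdimD : Module.finrank F (dualCode C₁) = Module.finrank F (dualCode C) + 1)
    (a b : Fin w → (Fin n → F))
    (hD : ∀ i j : Fin w, ((i : ℕ) + 1) + ((j : ℕ) + 1) ≤ w →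
      (fun k => a i k * b j k) ∈ dualCode C)
    (hD1 : ∀ i j : Fin w, ((i : ℕ) + 1) + ((j : ℕ) + 1) = w + 1 →
      (fun k => a i k * b j k) ∈ dualCode C₁ ∧ (fun k => a i k * b j k) ∉ dualCode C) :
    ∀ c ∈ C, c ∉ C₁ → w ≤ hammingNorm c :=
  coset_bound_general C C₁ hsub hdimC a b hD hD1
end

section
/- Let C₁ ⊂ C ⊂ F^n be linear codes with duals D ⊂ D₁ (so D = C^⊥, D₁ = C₁^⊥) and dim C/C₁ = dim D₁/D = 1. Let {1,…,n} = I ∪ J be a partition of the coordinates. Then there exists a word r ∈ C \ C₁ with support contained in I if and only if there exists no word s ∈ D₁ \ D with support contained in J. -/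
/-- Lemma `L:dual`: let `C₁ ⊆ C` be linear codes with duals `D = C^⊥ ⊆ D₁ = C₁^⊥`
and `dim C/C₁ = dim D₁/D = 1`, and let `{1,…,n} = I ∪ J` be a partition of the
coordinates.  There is a word `r ∈ C \ C₁` with support contained in `I` if and
only if there is no word `s ∈ D₁ \ D` with support contained in `J`. -/
theorem support_duality {F : Type*} [Field F] [Fintype F] {n : ℕ}
    (C C₁ : Submodule F (Fin n → F)) (hsub : C₁ ≤ C)
    (hdimC : Module.finrank F C = Module.finrank F C₁ + 1)
    (hdimD : Module.finrank F (dualCode C₁) = Module.finrank F (dualCode C) + 1)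
    (I J : Set (Fin n)) (hunion : I ∪ J = Set.univ) (hdisj : I ∩ J = ∅) :
    (∃ r ∈ C, r ∉ C₁ ∧ ∀ i : Fin n, r i ≠ 0 → i ∈ I) ↔
      ¬ ∃ s ∈ dualCode C₁, s ∉ dualCode C ∧ ∀ i : Fin n, s i ≠ 0 → i ∈ J := by
  classical
  have hne : C₁ ≠ C := by
    intro h; rw [h] at hdimC; omega
  obtain ⟨x, hxC, hxC₁⟩ := SetLike.exists_of_lt (lt_of_le_of_ne hsub hne)
  constructor
  · rintro ⟨r, hrC, hrC₁, hrI⟩ ⟨s, hsD₁, hsD, hsJ⟩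
    -- `C = C₁ ⊔ span r`
    have hCeq : C₁ ⊔ Submodule.span F {r} = C := by
      apply Submodule.eq_of_le_of_finrank_le
        (sup_le hsub (Submodule.span_le.2 (Set.singleton_subset_iff.2 hrC)))
      have hlt : C₁ < C₁ ⊔ Submodule.span F {r} := by
        refine lt_of_le_of_ne le_sup_left ?_
        intro h
        exact hrC₁ (h ▸ (le_sup_right : Submodule.span F {r} ≤ C₁ ⊔ _)
          (Submodule.mem_span_singleton_self r))
      have := Submodule.finrank_lt_finrank_of_lt hlt
      omega
    apply hsD
    intro c hc
    rw [← hCeq] at hc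
    obtain ⟨c₁, hc₁, t, ht, rfl⟩ := Submodule.mem_sup.1 hc
    obtain ⟨α, rfl⟩ := Submodule.mem_span_singleton.1 ht
    have h1 : ∑ i, s i * c₁ i = 0 := hsD₁ c₁ hc₁
    have h2 : ∑ i, s i * r i = 0 := by
      apply Finset.sum_eq_zero; intro i _
      by_cases h : s i = 0
      · simp [h]
      · have hri : r i = 0 := by
          by_contra hr
          have : i ∈ I ∩ J := ⟨hrI i hr, hsJ i h⟩
          simp [hdisj] at this
        simp [hri]
    have : ∑ i, s i * (c₁ + α • r) i = ∑ i, s i * c₁ i + α * ∑ i, s i * r i := by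
      rw [Finset.mul_sum, ← Finset.sum_add_distrib]
      apply Finset.sum_congr rfl
      intro i _
      simp [mul_add, mul_comm, mul_assoc, mul_left_comm]
    rw [this, h1, h2, mul_zero, add_zero]
  · intro hns
    by_contra hnr
    -- projection onto coordinates in J
    set π : (Fin n → F) →ₗ[F] (Fin n → F) :=
      { toFun := fun v i => if i ∈ J then v i else 0
        map_add' := by intro a b; funext i; by_cases h : i ∈ J <;> simp [h]
        map_smul' := by intro c a; funext i; by_cases h : i ∈ J <;> simp [h] } with hπ
    set U : Submodule F (Fin n → F) := Submodule.map π C₁ with hU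
    have hπx : π x ∉ U := by
      rintro ⟨c₁, hc₁, hpc⟩
      apply hnr
      refine ⟨x - c₁, Submodule.sub_mem C hxC (hsub hc₁), ?_, ?_⟩
      · intro h
        exact hxC₁ (by simpa using Submodule.add_mem C₁ h hc₁)
      · intro i hi
        by_cases hJ : i ∈ J
        · exfalso
          apply hi
          have := congrFun hpc i
          simp only [hπ, LinearMap.coe_mk, AddHom.coe_mk, if_pos hJ] at this
          simp [Pi.sub_apply, this]
        · have hm : i ∈ I ∪ J := hunion ▸ Set.mem_univ i
          exact hm.resolve_right hJ
    -- find a functional vanishing on U but not on π x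
    have hq : U.mkQ (π x) ≠ 0 := by
      intro h
      exact hπx ((Submodule.Quotient.mk_eq_zero U).1 h)
    have : ¬ ∀ φ : Module.Dual F ((Fin n → F) ⧸ U), φ (U.mkQ (π x)) = 0 := by
      rw [Module.forall_dual_apply_eq_zero_iff]
      exact hq
    push_neg at this
    obtain ⟨φ, hφ⟩ := this
    set ψ : (Fin n → F) →ₗ[F] F := φ.comp U.mkQ with hψ
    have hψU : ∀ u ∈ U, ψ u = 0 := by
      intro u hu
      have h0 : U.mkQ u = 0 := (Submodule.Quotient.mk_eq_zero U).2 hu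
      simp only [hψ, LinearMap.comp_apply, h0, map_zero]
    set z : Fin n → F := fun i => ψ (Pi.single i 1) with hz
    have key : ∀ v : Fin n → F, ∑ i, z i * v i = ψ v := by
      intro v
      have hv : v = ∑ i, v i • (Pi.single i (1 : F) : Fin n → F) := by
        funext j
        simp [Pi.single_apply, Finset.sum_ite_eq', mul_comm]
      conv_rhs => rw [hv]
      rw [map_sum]
      apply Finset.sum_congr rfl
      intro i _
      rw [map_smul]
      simp [hz, mul_comm]
    set s : Fin n → F := fun i => if i ∈ J then z i else 0 with hs
    have hsum : ∀ v : Fin n → F, ∑ i, s i * v i = ψ (π v) := by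
      intro v
      rw [← key (π v)]
      apply Finset.sum_congr rfl
      intro i _
      by_cases h : i ∈ J <;> simp [hs, hπ, h]
    apply hns
    refine ⟨s, ?_, ?_, ?_⟩
    · intro c hc
      rw [hsum c]
      exact hψU (π c) ⟨c, hc, rfl⟩
    · intro hmem
      have := hmem x hxC
      rw [hsum x] at this
      exact hφ this
    · intro i hi
      by_contra h
      exact hi (by simp [hs, h])
end

section
/- Let X be a smooth projective curve of genus g, P a rational point, C a divisor class, and define Δ_P(C) = {A ∈ Γ_P : A−C ∉ Γ_P} where Γ_P = {A : L(A) ≠ L(A−P)}. Then for any divisor A, A ∈ Δ_P(C) if and only if K+C+P−A ∈ Δ_P(C), where K is a canonical divisor. Moreover, every A ∈ Δ_P(C) satisfies min{0, deg C} ≤ deg A ≤ max{2g−1, deg C + 2g−1}. -/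
/-- An abstract model of a smooth projective curve `X` over a field: divisors are
finitely supported `ℤ`-valued functions on the (closed) points, `l A` is the
dimension of the Riemann–Roch space `L(A)`, `K` is a canonical divisor, `g` is
the genus, and `lequiv` is linear equivalence of divisors.  The axioms record
the standard facts about Riemann–Roch spaces used in the paper. -/
structure AlgCurve where
  Point : Type
  g : ℕ
  K : Point →₀ ℤ
  l : (Point →₀ ℤ) → ℕ
  lequiv : (Point →₀ ℤ) → (Point →₀ ℤ) → Prop
  lequiv_refl : ∀ A, lequiv A A
  lequiv_symm : ∀ {A B}, lequiv A B → lequiv B A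
  lequiv_trans : ∀ {A B C}, lequiv A B → lequiv B C → lequiv A C
  lequiv_add : ∀ {A B} (C), lequiv A B → lequiv (A + C) (B + C)
  deg_lequiv : ∀ {A B}, lequiv A B → A.sum (fun _ n => n) = B.sum (fun _ n => n)
  l_lequiv : ∀ {A B}, lequiv A B → l A = l B
  /-- `l` vanishes on divisors of negative degree. -/
  l_neg : ∀ {A}, A.sum (fun _ n => n) < 0 → l A = 0
  l_zero_divisor : l 0 = 1
  /-- removing a point decreases `l` by at most one -/
  l_step : ∀ (A) (P : Point), l A ≤ l (A - Finsupp.single P 1) + 1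
  l_mono : ∀ (A) (P : Point), l (A - Finsupp.single P 1) ≤ l A
  /-- the Riemann–Roch theorem -/
  riemann_roch : ∀ A, (l A : ℤ) - l (K - A) = A.sum (fun _ n => n) + 1 - g

namespace AlgCurve

variable (X : AlgCurve)

/-- The degree of a divisor. -/
def deg (A : X.Point →₀ ℤ) : ℤ := A.sum fun _ n => n

/-- `A ∈ Γ_P`, i.e. `L(A) ≠ L(A − P)`: the class of `A` is effective with no
base point at `P`. -/
def Gamma (P : X.Point) (A : X.Point →₀ ℤ) : Prop :=
  X.l A ≠ X.l (A - Finsupp.single P 1)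

/-- `A ∈ Δ_P(C)`, i.e. `L(A) ≠ L(A−P)` and `L(A−C) = L(A−C−P)`. -/
def DeltaP (P : X.Point) (C A : X.Point →₀ ℤ) : Prop :=
  X.Gamma P A ∧ ¬ X.Gamma P (A - C)

/-- `γ_P(C)`: the minimal degree of a divisor `A` with `A ∈ Γ_P` and `A − C ∈ Γ_P`. -/
noncomputable def gammaP (P : X.Point) (C : X.Point →₀ ℤ) : ℤ :=
  sInf {d : ℤ | ∃ A, X.Gamma P A ∧ X.Gamma P (A - C) ∧ X.deg A = d}

lemma deg_add (A B : X.Point →₀ ℤ) : X.deg (A + B) = X.deg A + X.deg B :=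
  Finsupp.sum_add_index' (fun _ => rfl) (fun _ _ _ => rfl)

lemma deg_sub (A B : X.Point →₀ ℤ) : X.deg (A - B) = X.deg A - X.deg B := by
  have h := X.deg_add (A - B) B
  rw [sub_add_cancel] at h
  omega

lemma deg_single (P : X.Point) : X.deg (Finsupp.single P 1) = 1 := by
  simp [deg]

lemma deg_zero : X.deg 0 = 0 := by simp [deg]

/-- Riemann–Roch restated with `deg`. -/
lemma rr (A : X.Point →₀ ℤ) :
    (X.l A : ℤ) - X.l (X.K - A) = X.deg A + 1 - X.g :=
  X.riemann_roch A

lemma deg_K : X.deg X.K = 2 * (X.g : ℤ) - 2 := by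
  have h0 := X.rr 0
  have hK := X.rr X.K
  rw [sub_zero] at h0
  rw [sub_self] at hK
  rw [X.deg_zero] at h0
  rw [X.l_zero_divisor] at hK
  rw [X.l_zero_divisor] at h0
  omega

/-- Key duality: `A ∈ Γ_P` iff `K + P − A ∉ Γ_P`. -/
lemma gamma_dual (P : X.Point) (A : X.Point →₀ ℤ) :
    X.Gamma P A ↔ ¬ X.Gamma P (X.K + Finsupp.single P 1 - A) := by
  have e1 : X.K + Finsupp.single P 1 - A - Finsupp.single P 1 = X.K - A := by abel
  have e2 : X.K - (A - Finsupp.single P 1) = X.K + Finsupp.single P 1 - A := by abel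
  have r1 := X.rr A
  have r2 := X.rr (A - Finsupp.single P 1)
  rw [e2, X.deg_sub, X.deg_single] at r2
  have s1 := X.l_step A P
  have s2 := X.l_mono A P
  have s3 := X.l_step (X.K + Finsupp.single P 1 - A) P
  have s4 := X.l_mono (X.K + Finsupp.single P 1 - A) P
  rw [e1] at s3 s4
  unfold Gamma
  rw [e1]
  constructor
  · intro h h'
    omega
  · intro h
    omega

lemma gamma_deg_nonneg (P : X.Point) (A : X.Point →₀ ℤ) (h : X.Gamma P A) :
    0 ≤ X.deg A := by
  by_contra hneg
  push_neg at hneg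
  have hA : X.l A = 0 := X.l_neg hneg
  have := X.l_mono A P
  exact h (by omega)

end AlgCurve

/-- Lemma `L:Ddegree`: `A ∈ Δ_P(C)` iff `K + C + P − A ∈ Δ_P(C)`, and every
`A ∈ Δ_P(C)` satisfies `min {0, deg C} ≤ deg A ≤ max {2g−1, deg C + 2g−1}`. -/
theorem delta_degree_bounds (X : AlgCurve) (P : X.Point) (C A : X.Point →₀ ℤ) :
    (X.DeltaP P C A ↔ X.DeltaP P C (X.K + C + Finsupp.single P 1 - A)) ∧
      (X.DeltaP P C A →
        min 0 (X.deg C) ≤ X.deg A ∧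
          X.deg A ≤ max (2 * (X.g : ℤ) - 1) (X.deg C + 2 * (X.g : ℤ) - 1)) := by
  set B := X.K + C + Finsupp.single P 1 - A with hB
  have eB1 : X.K + Finsupp.single P 1 - B = A - C := by rw [hB]; abel
  have eB2 : X.K + Finsupp.single P 1 - (B - C) = A := by rw [hB]; abel
  have h1 : X.Gamma P B ↔ ¬ X.Gamma P (A - C) := by
    rw [X.gamma_dual P B, eB1]
  have h2 : ¬ X.Gamma P (B - C) ↔ X.Gamma P A := by
    have t := X.gamma_dual P (B - C)
    rw [eB2] at t
    rw [t, not_not]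
  have hiff : X.DeltaP P C A ↔ X.DeltaP P C B := by
    unfold AlgCurve.DeltaP
    rw [h1, h2]
    tauto
  refine ⟨hiff, fun h => ?_⟩
  have hA0 : 0 ≤ X.deg A := X.gamma_deg_nonneg P A h.1
  have hB0 : 0 ≤ X.deg B := X.gamma_deg_nonneg P B (hiff.mp h).1
  have hdB : X.deg B = X.deg X.K + X.deg C + 1 - X.deg A := by
    rw [hB, X.deg_sub, X.deg_add, X.deg_add, X.deg_single]
  have hK := X.deg_K
  constructor
  · exact le_trans (min_le_left _ _) hA0
  · refine le_trans ?_ (le_max_right _ _)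
    omega
end

section
/- Let X be a smooth projective curve and P, Q distinct rational points. Then Δ_P(Q) = Δ_Q(P), where Δ_P(Q) = {A : L(A) ≠ L(A−P) and L(A−Q) = L(A−Q−P)}. -/
/-- For distinct points `P` and `Q`, `Δ_P(Q) = Δ_Q(P)`:
`L(A) ≠ L(A−P) ∧ L(A−Q) = L(A−Q−P)` iff `L(A) ≠ L(A−Q) ∧ L(A−P) = L(A−P−Q)`. -/
theorem delta_symm (X : AlgCurve) (P Q : X.Point) (hPQ : P ≠ Q)
    (A : X.Point →₀ ℤ) :
    X.DeltaP P (Finsupp.single Q 1) A ↔ X.DeltaP Q (Finsupp.single P 1) A := by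
  have e : A - Finsupp.single Q 1 - Finsupp.single P 1
      = A - Finsupp.single P 1 - Finsupp.single Q 1 := sub_right_comm _ _ _
  have hAP1 := X.l_step A P
  have hAP2 := X.l_mono A P
  have hAQ1 := X.l_step A Q
  have hAQ2 := X.l_mono A Q
  have hPQ1 := X.l_step (A - Finsupp.single P 1) Q
  have hPQ2 := X.l_mono (A - Finsupp.single P 1) Q
  have hQP1 := X.l_step (A - Finsupp.single Q 1) P
  have hQP2 := X.l_mono (A - Finsupp.single Q 1) P
  simp only [AlgCurve.DeltaP, AlgCurve.Gamma, e] at *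
  omega
end

section
/- Let X be a smooth projective curve, P ≠ Q rational points, and A, C divisors. Then A ∈ Δ_P(C+Q) if and only if A_P ≤ A ≤ (A−C)_P + C, where for a divisor B, B_P denotes the unique element of {B+kQ : k ∈ ℤ} ∩ Δ_Q(P) (divisor inequalities compare the multiplicity at Q, all other multiplicities being equal). -/
theorem delta_interval_general (X : AlgCurve) (P Q : X.Point)
    (A C : X.Point →₀ ℤ) (kA kAC : ℤ)
    (hkA : ∀ k : ℤ, X.Gamma P (A + Finsupp.single Q k) ↔ kA ≤ k)
    (hkAC : ∀ k : ℤ, X.Gamma P (A - C + Finsupp.single Q k) ↔ kAC ≤ k) :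
    X.DeltaP P (C + Finsupp.single Q 1) A ↔
      (A + Finsupp.single Q kA ≤ A ∧
        A ≤ (A - C + Finsupp.single Q kAC) + C) := by
  have hA : X.Gamma P A ↔ kA ≤ 0 := by simpa using hkA 0
  have hAC : X.Gamma P (A - (C + Finsupp.single Q 1)) ↔ kAC ≤ -1 := by
    rw [← hkAC, Finsupp.single_neg, ← sub_eq_add_neg, sub_sub]
  rw [AlgCurve.DeltaP, hA, hAC, add_le_iff_nonpos_right, Finsupp.single_nonpos,
    add_right_comm, sub_add_cancel, le_add_iff_nonneg_right, Finsupp.single_nonneg]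
  omega

/-- Theorem `T:ApA`: `A ∈ Δ_P(C+Q)` iff `A_P ≤ A ≤ (A−C)_P + C`, where for a
divisor `B`, `B_P = B + k₀Q` is the unique element of `{B + kQ : k ∈ ℤ} ∩ Δ_Q(P)`,
with `k₀` characterized by `B + kQ ∈ Γ_P ↔ k₀ ≤ k`. -/
theorem delta_interval (X : AlgCurve) (P Q : X.Point) (hPQ : P ≠ Q)
    (A C : X.Point →₀ ℤ) (kA kAC : ℤ)
    (hkA : ∀ k : ℤ, X.Gamma P (A + Finsupp.single Q k) ↔ kA ≤ k)
    (hkAC : ∀ k : ℤ, X.Gamma P (A - C + Finsupp.single Q k) ↔ kAC ≤ k) :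
    X.DeltaP P (C + Finsupp.single Q 1) A ↔
      (A + Finsupp.single Q kA ≤ A ∧
        A ≤ (A - C + Finsupp.single Q kAC) + C) :=
  delta_interval_general X P Q A C kA kAC hkA hkAC
end

section
/- For any nonnegative integer q₀, the set of integers {a(q₀+1) + b·q₀ : a, b ∈ ℤ, |a| + |b| ≤ q₀} equals the interval of integers {−q₀(q₀+1), …, q₀(q₀+1)}. -/
/-!
Writing `n = (q+1)k + r` with `0 ≤ r ≤ q`, the residues of a representation `n = a(q+1) + bq`
are forced: `a ≡ n (mod q)` and `b ≡ -r (mod q+1)`. The two candidates `(k + r, -r)` and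
`(k + r - q, q + 1 - r)` have costs `k + 2r` and `2q + 1 - k - 2r` (or `k + 1` when `k + r ≥ q`),
and one of them is at most `q` as soon as `n ≤ q(q+1)`. Negative `n` follow by symmetry,
and the reverse inclusion is the triangle inequality.
-/

lemma abs_mul_add_mul_le {α : Type*} [CommRing α] [LinearOrder α] [IsStrictOrderedRing α]
    {q a b : α} (hq : 0 ≤ q) (hab : |a| + |b| ≤ q) :
    |a * (q + 1) + b * q| ≤ q * (q + 1) :=
  calc |a * (q + 1) + b * q|
      ≤ |a| * (q + 1) + |b| * q := by
        grw [abs_add_le, abs_mul, abs_mul, abs_of_nonneg hq,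
          abs_of_nonneg (by positivity : 0 ≤ q + 1)]
    _ ≤ (|a| + |b|) * (q + 1) := by linear_combination abs_nonneg b
    _ ≤ q * (q + 1) := by gcongr

lemma exists_repr_of_le {q k r : ℤ} (hk : 0 ≤ k) (hr : 0 ≤ r) (hrq : r ≤ q)
    (hn : (q + 1) * k + r ≤ q * (q + 1)) :
    ∃ a b : ℤ, |a| + |b| ≤ q ∧ (q + 1) * k + r = a * (q + 1) + b * q := by
  have hkq : k ≤ q := by nlinarith
  have hr_eq : k = q → r = 0 := by
    rintro rfl
    nlinarith
  by_cases hsmall : k + 2 * r ≤ q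
  · refine ⟨k + r, -r, ?_, by ring⟩
    rw [abs_of_nonneg (by omega), abs_neg, abs_of_nonneg hr]
    omega
  · refine ⟨k + r - q, q + 1 - r, ?_, by ring⟩
    rw [abs_of_nonneg (show 0 ≤ q + 1 - r by omega)]
    rcases le_total 0 (k + r - q) with h | h
    · rw [abs_of_nonneg h]; omega
    · rw [abs_of_nonpos h]; omega

lemma exists_repr_of_nonneg {q n : ℤ} (hq : 0 ≤ q) (hn0 : 0 ≤ n) (hn : n ≤ q * (q + 1)) :
    ∃ a b : ℤ, |a| + |b| ≤ q ∧ n = a * (q + 1) + b * q := by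
  have hq1 : 0 < q + 1 := by omega
  have hdiv := Int.mul_ediv_add_emod n (q + 1)
  rw [← hdiv] at hn ⊢
  exact exists_repr_of_le (Int.ediv_nonneg hn0 hq1.le) (Int.emod_nonneg n hq1.ne')
    (Int.lt_add_one_iff.mp (Int.emod_lt_of_pos n hq1)) hn

lemma exists_repr_of_abs_le {q n : ℤ} (hq : 0 ≤ q) (hn : |n| ≤ q * (q + 1)) :
    ∃ a b : ℤ, |a| + |b| ≤ q ∧ n = a * (q + 1) + b * q := by
  rcases le_total 0 n with h | h
  · exact exists_repr_of_nonneg hq h (by rwa [abs_of_nonneg h] at hn)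
  · obtain ⟨a, b, hab, hrepr⟩ := exists_repr_of_nonneg hq (neg_nonneg.mpr h)
      (by rwa [abs_of_nonpos h] at hn)
    exact ⟨-a, -b, by simpa using hab, by linear_combination -hrepr⟩

/-- Lemma `L:q0`: for any nonnegative integer `q₀`,
`{a(q₀+1) + b·q₀ : |a| + |b| ≤ q₀} = {−q₀(q₀+1), …, q₀(q₀+1)}`. -/
theorem interval_representation (q₀ : ℕ) :
    {n : ℤ | ∃ a b : ℤ, |a| + |b| ≤ (q₀ : ℤ) ∧
        n = a * ((q₀ : ℤ) + 1) + b * (q₀ : ℤ)} =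
      Set.Icc (-((q₀ : ℤ) * ((q₀ : ℤ) + 1))) ((q₀ : ℤ) * ((q₀ : ℤ) + 1)) := by
  have hq : (0 : ℤ) ≤ q₀ := Int.natCast_nonneg q₀
  ext n
  rw [Set.mem_ofPred_eq, Set.mem_Icc, ← abs_le]
  constructor
  · rintro ⟨a, b, hab, rfl⟩
    exact abs_mul_add_mul_le hq hab
  · exact exists_repr_of_abs_le hq
end
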